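/- There is no first-order formula ψ(x, y) with two free variables over the language with a single binary relation symbol such that for every dimension n ≥ 1 and all partial instances e, e' of dimension n, the structure C_n ⊨ ψ(e, e') if and only if e ⊑ e' (e is subsumed by e'). -/

import Mathlib

open FirstOrder FirstOrder.Language

abbrev PI (n : ℕ) : Type := Fin n → Option Bool

def Subs {n : ℕ} (e e' : PI n) : Prop := ∀ i, e i ≠ none → e' i = e i

noncomputable def undefCard {n : ℕ} (e : PI n) : ℕ := Set.ncard {i | e i = none}

/-- `e ⪯ e'` iff `|e_⊥| ≥ |e'_⊥|`. -/
def Lel {n : ℕ} (e e' : PI n) : Prop := undefCard e' ≤ undefCard e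

/-- The language with a single binary relation symbol. -/
def lelLang : Language where
  Functions _ := Empty
  Relations n := match n with
    | 2 => Unit
    | _ => Empty

/-- The structure `C_n`: partial instances of dimension `n` with the relation `⪯`. -/
instance lelStruct (n : ℕ) : lelLang.Structure (PI n) where
  funMap := fun {_} f => f.elim
  RelMap := fun {k} r v => match k, r with
    | 2, _ => Lel (v 0) (v 1)

/-! A permutation of the partial instances that preserves the number of undefined features is an
automorphism of `C_n`, so every relation definable in `C_n` is invariant under it. In dimension 2,
swapping the total instances `(T, T)` and `(T, F)` while fixing `(⊥, T)` breaks subsumption: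
`(⊥, T) ⊑ (T, T)` but not `(⊥, T) ⊑ (T, F)`. -/

def lelEquivOfUndefCard {n : ℕ} (σ : Equiv.Perm (PI n))
    (hσ : ∀ e, undefCard (σ e) = undefCard e) : PI n ≃[lelLang] PI n where
  toEquiv := σ
  map_fun' := fun f => f.elim
  map_rel' := fun {k} r v => match k, r with
    | 2, _ => by
      change Lel _ _ ↔ Lel _ _
      simp only [Lel, Function.comp_apply, Equiv.toFun_as_coe, hσ]

theorem realize_comp_iff_of_undefCard {n : ℕ} {α : Type*} (σ : Equiv.Perm (PI n))
    (hσ : ∀ e, undefCard (σ e) = undefCard e) (ψ : lelLang.Formula α) (v : α → PI n) :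
    ψ.Realize (σ ∘ v) ↔ ψ.Realize v :=
  StrongHomClass.realize_formula (lelEquivOfUndefCard σ hσ) ψ

theorem subs_iff_of_definable {n : ℕ} {ψ : lelLang.Formula (Fin 2)}
    (hψ : ∀ e e' : PI n, ψ.Realize ![e, e'] ↔ Subs e e') (σ : Equiv.Perm (PI n))
    (hσ : ∀ e, undefCard (σ e) = undefCard e) (e e' : PI n) :
    Subs (σ e) (σ e') ↔ Subs e e' := by
  rw [← hψ, ← hψ, ← realize_comp_iff_of_undefCard σ hσ ψ (![e, e']),
    ← FinVec.map_eq]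
  -- `FinVec.map σ ![e, e']` reduces to `![σ e, σ e']`
  rfl

theorem apply_swap_apply_of_apply_eq {α β : Type*} [DecidableEq α] (f : α → β) {a b : α}
    (hab : f a = f b) (x : α) : f (Equiv.swap a b x) = f x := by
  rcases eq_or_ne x a with rfl | ha
  · rw [Equiv.swap_apply_left, hab]
  rcases eq_or_ne x b with rfl | hb
  · rw [Equiv.swap_apply_right, hab]
  · rw [Equiv.swap_apply_of_ne_of_ne ha hb]

theorem undefCard_eq_zero_of_forall_ne_none {n : ℕ} {e : PI n} (he : ∀ i, e i ≠ none) :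
    undefCard e = 0 := by
  simp [undefCard, he]

theorem stmt2 :
    ¬ ∃ ψ : lelLang.Formula (Fin 2),
      ∀ (n : ℕ), 1 ≤ n → ∀ (e e' : PI n),
        (ψ.Realize ![e, e'] ↔ Subs e e') := by
  rintro ⟨ψ, hψ⟩
  let e₀ : PI 2 := ![none, some true]
  let a : PI 2 := ![some true, some true]
  let b : PI 2 := ![some true, some false]
  have hab : undefCard a = undefCard b := by
    rw [undefCard_eq_zero_of_forall_ne_none, undefCard_eq_zero_of_forall_ne_none] <;> decide
  have key := subs_iff_of_definable (hψ 2 (by norm_num)) (Equiv.swap a b)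
    (apply_swap_apply_of_apply_eq undefCard hab) e₀ a
  rw [Equiv.swap_apply_of_ne_of_ne (by decide) (by decide), Equiv.swap_apply_left] at key
  exact absurd key (by unfold Subs; decide)
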